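/- Let P > 0, let u : ℝ → ℝ be twice continuously differentiable and periodic with period 2P, let A, Ĉ, D̂, U be real constants with A ≠ 0, suppose for all θ both A·u'(θ)² = 2D̂ + 2Ĉ·u(θ) + U·u(θ)² − (1/3)u(θ)³ and A·u''(θ) = Ĉ + U·u(θ) − (1/2)u(θ)², and let d = (1/(2P))∫_{−P}^{P} u(θ) dθ. Then (1/(2P))∫_{−P}^{P} A·u'(θ)² dθ = (2/5)·(3D̂ + 2Ĉd + U(Ĉ + Ud)). -/

import Mathlib

/-!
Multiply the second-integral relation by `2 (U - u)` and add three times the first-integral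
relation: the quadratic and cubic terms in `u` cancel, leaving
`5 A u'² = 6D̂ + 2UĈ + (4Ĉ + 2U²) u + 2A (u u')' - 2UA u''`.
Over a period the two exact derivatives integrate to zero, so the mean of `A u'²` is affine in
the mean `d` of `u`.
-/

open intervalIntegral

theorem Function.Periodic.deriv {𝕜 F : Type*} [NontriviallyNormedField 𝕜] [NormedAddCommGroup F]
    [NormedSpace 𝕜 F] {f : 𝕜 → F} {T : 𝕜} (hf : Function.Periodic f T) :
    Function.Periodic (deriv f) T := fun x => by
  rw [← deriv_comp_add_const, show (fun y => f (y + T)) = f from funext hf]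

theorem intervalIntegral_deriv_eq_zero_of_periodic {f : ℝ → ℝ} {T : ℝ}
    (hf : Function.Periodic f T) (hd : Differentiable ℝ f) (a : ℝ)
    (hint : IntervalIntegrable (deriv f) MeasureTheory.volume a (a + T)) :
    ∫ x in a..a + T, deriv f x = 0 := by
  rw [integral_deriv_eq_sub (fun x _ => hd x) hint, hf, sub_self]

section SecondOrder

variable {u : ℝ → ℝ} {T : ℝ}

theorem intervalIntegral_deriv_deriv_eq_zero_of_periodic (hu : ContDiff ℝ 2 u)
    (hper : Function.Periodic u T) (a : ℝ) :
    ∫ x in a..a + T, deriv (deriv u) x = 0 :=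
  have hu' : ContDiff ℝ 1 (deriv u) := hu.deriv'
  intervalIntegral_deriv_eq_zero_of_periodic hper.deriv (hu'.differentiable one_ne_zero) a
    (hu'.continuous_deriv_one.intervalIntegrable _ _)

theorem intervalIntegral_sq_deriv_add_mul_deriv_deriv_eq_zero_of_periodic
    (hu : ContDiff ℝ 2 u) (hper : Function.Periodic u T) (a : ℝ) :
    ∫ x in a..a + T, (deriv u x ^ 2 + u x * deriv (deriv u) x) = 0 := by
  have hu' : ContDiff ℝ 1 (deriv u) := hu.deriv'
  have hdu := hu.differentiable two_ne_zero
  have hddu := hu'.differentiable one_ne_zero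
  have hprod : deriv (u * deriv u) =
      fun x => deriv u x ^ 2 + u x * deriv (deriv u) x := by
    funext x
    rw [deriv_mul (hdu x) (hddu x), sq]
  rw [← hprod]
  refine intervalIntegral_deriv_eq_zero_of_periodic (hper.mul hper.deriv) (hdu.mul hddu) a ?_
  have hcu := hu.continuous
  have hcu' := hu'.continuous
  have hcu'' := hu'.continuous_deriv_one
  rw [hprod]
  exact Continuous.intervalIntegrable (by fun_prop) _ _

end SecondOrder

theorem stmt_3 (P : ℝ) (hP : 0 < P) (u : ℝ → ℝ) (A C D U d : ℝ)
    (hu : ContDiff ℝ 2 u) (hper : Function.Periodic u (2 * P))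
    (hfirst : ∀ θ : ℝ, A * (deriv u θ) ^ 2 =
      2 * D + 2 * C * u θ + U * (u θ) ^ 2 - (1 / 3) * (u θ) ^ 3)
    (hsecond : ∀ θ : ℝ, A * deriv (deriv u) θ = C + U * u θ - (1 / 2) * (u θ) ^ 2)
    (hd : d = (1 / (2 * P)) * ∫ θ in (-P)..P, u θ) :
    (1 / (2 * P)) * ∫ θ in (-P)..P, A * (deriv u θ) ^ 2 =
      (2 / 5) * (3 * D + 2 * C * d + U * (C + U * d)) := by
  have hu' : ContDiff ℝ 1 (deriv u) := hu.deriv'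
  have hcu := hu.continuous
  have hcu' := hu'.continuous
  have hcu'' := hu'.continuous_deriv_one
  have hperiod : -P + 2 * P = P := by ring
  have hexact₁ := intervalIntegral_deriv_deriv_eq_zero_of_periodic hu hper (-P)
  have hexact₂ := intervalIntegral_sq_deriv_add_mul_deriv_deriv_eq_zero_of_periodic hu hper (-P)
  rw [hperiod] at hexact₁ hexact₂
  have hpointwise : ∀ θ, 5 * (A * deriv u θ ^ 2) =
      (6 * D + 2 * U * C) + (4 * C + 2 * U ^ 2) * u θ
        + 2 * A * (deriv u θ ^ 2 + u θ * deriv (deriv u) θ) - 2 * U * A * deriv (deriv u) θ :=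
    fun θ => by linear_combination 3 * hfirst θ + (2 * U - 2 * u θ) * hsecond θ
  have hintegral : 5 * ∫ θ in (-P)..P, A * deriv u θ ^ 2 =
      (6 * D + 2 * U * C) * (2 * P) + (4 * C + 2 * U ^ 2) * ∫ θ in (-P)..P, u θ := by
    rw [← integral_const_mul, integral_congr fun θ _ => hpointwise θ, integral_sub, integral_add,
      integral_add, integral_const, integral_const_mul, integral_const_mul, integral_const_mul,
      hexact₁, hexact₂]
    · simp only [smul_eq_mul]
      ring
    all_goals exact Continuous.intervalIntegrable (by fun_prop) _ _
  rw [hd]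
  field_simp
  linear_combination hintegral
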